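/- Let L be a fuzzy lax extension of a Set-functor T. (1) If d : X ×> X is a hemimetric, then Ld is a hemimetric on TX; if moreover d is a pseudometric and L preserves converse, then Ld is a pseudometric. (2) If f : X → Y is nonexpansive from (X,d₁) to (Y,d₂), i.e. d₂(f(x),f(x')) ≤ d₁(x,x') for all x,x', then Tf is nonexpansive from (TX, Ld₁) to (TY, Ld₂). -/
import Mathlib


open unitInterval

noncomputable section

instance : Fact ((0:ℝ) ≤ 1) := ⟨zero_le_one⟩

/-- A fuzzy relation between `A` and `B` is a map `A × B → [0,1]`. -/
abbrev FRel (A B : Type) : Type := A → B → I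

/-- Clamp a real number into the unit interval. -/
def clamp (x : ℝ) : I := Set.projIcc 0 1 zero_le_one x

/-- Composition of fuzzy relations: `(R;S)(a,c) = inf_b min(R(a,b) + S(b,c), 1)`. -/
def fcomp {A B C : Type} (R : FRel A B) (S : FRel B C) : FRel A C :=
  fun a c => ⨅ b : B, clamp ((R a b : ℝ) + (S b c : ℝ))

/-- Converse of a fuzzy relation. -/
def fconv {A B : Type} (R : FRel A B) : FRel B A := fun b a => R a b

open scoped Classical in
/-- The `ε`-graph of a function. -/
def fgraphE {A B : Type} (ε : I) (f : A → B) : FRel A B :=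
  fun a b => if f a = b then ε else 1

/-- The graph of a function. -/
def fgraph {A B : Type} (f : A → B) : FRel A B := fgraphE 0 f

/-- The `ε`-diagonal. -/
def fdiagE (ε : I) (A : Type) : FRel A A := fgraphE ε (id : A → A)

/-- The diagonal. -/
def fdiag (A : Type) : FRel A A := fgraph (id : A → A)

/-- A Set-functor. -/
structure SetFunctor where
  obj : Type → Type
  map : {A B : Type} → (A → B) → obj A → obj B
  map_id : ∀ (A : Type), map (id : A → A) = id
  map_comp : ∀ {A B C : Type} (f : A → B) (g : B → C), map (g ∘ f) = map g ∘ map f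

/-- A fuzzy lax extension of a Set-functor. -/
structure LaxExt (T : SetFunctor) where
  lift : {A B : Type} → FRel A B → FRel (T.obj A) (T.obj B)
  mono : ∀ {A B : Type} (R S : FRel A B), R ≤ S → lift R ≤ lift S
  lax_comp : ∀ {A B C : Type} (R : FRel A B) (S : FRel B C),
    lift (fcomp R S) ≤ fcomp (lift R) (lift S)
  lax_graph : ∀ {A B : Type} (f : A → B), lift (fgraph f) ≤ fgraph (T.map f)
  lax_graph_conv : ∀ {A B : Type} (f : A → B),
    lift (fconv (fgraph f)) ≤ fconv (fgraph (T.map f))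

end

/-- `d` is a hemimetric: reflexivity and the triangle inequality. -/
def IsHemimetric {X : Type} (d : FRel X X) : Prop :=
  (∀ x, d x x = 0) ∧ ∀ x y z, (d x z : ℝ) ≤ (d x y : ℝ) + (d y z : ℝ)

/-- `d` is a pseudometric: a symmetric hemimetric. -/
def IsPseudometric {X : Type} (d : FRel X X) : Prop :=
  IsHemimetric d ∧ ∀ x y, d x y = d y x

/-- `L` preserves converse. -/
def PreservesConv (T : SetFunctor) (L : LaxExt T) : Prop :=
  ∀ (A B : Type) (R : FRel A B), L.lift (fconv R) = fconv (L.lift R)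

lemma clamp_coe (x : I) : clamp (x : ℝ) = x := Set.projIcc_val zero_le_one x

lemma clamp_mono : Monotone clamp := Set.monotone_projIcc zero_le_one

lemma le_clamp {y : I} {x : ℝ} (h : (y:ℝ) ≤ x) : y ≤ clamp x := by
  calc y = clamp (y:ℝ) := (clamp_coe y).symm
  _ ≤ clamp x := clamp_mono h

lemma coe_clamp_le {x : ℝ} (h : 0 ≤ x) : (clamp x : ℝ) ≤ x := by
  have : ((clamp x : I) : ℝ) = 0 ⊔ 1 ⊓ x := Set.coe_projIcc 0 1 zero_le_one x
  rw [this]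
  simp only [sup_le_iff, h, true_and, inf_le_iff]
  right; rfl

lemma eq_zero_of_le_zero {x : I} (h : x ≤ 0) : x = 0 := le_antisymm h x.2.1

/-- a fuzzy lax extension lifts hemimetrics to hemimetrics (pseudometrics to
pseudometrics if it preserves converse) and preserves nonexpansive maps. -/
theorem lax_extension_functor_lifting (T : SetFunctor) (L : LaxExt T) :
    (∀ (X : Type) (d : FRel X X), IsHemimetric d → IsHemimetric (L.lift d)) ∧
    (∀ (X : Type) (d : FRel X X), IsPseudometric d → PreservesConv T L →
      IsPseudometric (L.lift d)) ∧
    (∀ (X Y : Type) (d₁ : FRel X X) (d₂ : FRel Y Y) (f : X → Y),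
      (∀ x x', (d₂ (f x) (f x') : ℝ) ≤ (d₁ x x' : ℝ)) →
      ∀ t t', (L.lift d₂ (T.map f t) (T.map f t') : ℝ) ≤ (L.lift d₁ t t' : ℝ)) := by
  have hemi : ∀ (X : Type) (d : FRel X X), IsHemimetric d → IsHemimetric (L.lift d) := by
    intro X d ⟨hrefl, htri⟩
    constructor
    · intro t
      apply eq_zero_of_le_zero
      have h1 : d ≤ fgraph (id : X → X) := by
        intro x y
        unfold fgraph fgraphE
        split
        · rename_i h; simp only [id_eq] at h; subst h; rw [hrefl]
        · exact (d x y).2.2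
      have h2 : L.lift d t t ≤ fgraph (T.map (id : X → X)) t t :=
        le_trans (L.mono _ _ h1 t t) (L.lax_graph id t t)
      rw [T.map_id] at h2
      simpa [fgraph, fgraphE] using h2
    · intro t₁ t₂ t₃
      have h1 : d ≤ fcomp d d := by
        intro x z
        refine le_iInf fun y => le_clamp ?_
        exact htri x y z
      have h2 : L.lift d t₁ t₃ ≤ fcomp (L.lift d) (L.lift d) t₁ t₃ :=
        le_trans (L.mono _ _ h1 t₁ t₃) (L.lax_comp d d t₁ t₃)
      have h3 : fcomp (L.lift d) (L.lift d) t₁ t₃ ≤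
          clamp ((L.lift d t₁ t₂ : ℝ) + (L.lift d t₂ t₃ : ℝ)) := iInf_le _ t₂
      have h4 : (clamp ((L.lift d t₁ t₂ : ℝ) + (L.lift d t₂ t₃ : ℝ)) : ℝ) ≤
          (L.lift d t₁ t₂ : ℝ) + (L.lift d t₂ t₃ : ℝ) :=
        coe_clamp_le (add_nonneg (L.lift d t₁ t₂).2.1 (L.lift d t₂ t₃).2.1)
      exact le_trans (le_trans h2 h3) h4
  refine ⟨hemi, ?_, ?_⟩
  · intro X d ⟨hd, hsym⟩ hconv
    refine ⟨hemi X d hd, fun t t' => ?_⟩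
    have h1 : fconv d = d := by funext x y; exact hsym y x
    have := hconv X X d
    rw [h1] at this
    calc L.lift d t t' = fconv (L.lift d) t t' := by rw [← this]
    _ = L.lift d t' t := rfl
  · intro X Y d₁ d₂ f hf t t'
    set P : FRel Y Y := fcomp (fconv (fgraph f)) (fcomp d₁ (fgraph f)) with hP
    have hle : d₂ ≤ P := by
      intro y y'
      refine le_iInf fun x => ?_
      by_cases hx : f x = y
      · subst hx
        refine le_clamp ?_
        have hinner : d₂ (f x) y' ≤ fcomp d₁ (fgraph f) x y' := by
          refine le_iInf fun x' => ?_
          by_cases hx' : f x' = y'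
          · subst hx'
            refine le_clamp ?_
            calc (d₂ (f x) (f x') : ℝ) ≤ (d₁ x x' : ℝ) := hf x x'
            _ ≤ (d₁ x x' : ℝ) + (fgraph f x' (f x') : ℝ) := by
                have : (0:ℝ) ≤ (fgraph f x' (f x') : ℝ) := (fgraph f x' (f x')).2.1
                linarith
          · refine le_clamp ?_
            have h1 : (fgraph f x' y' : ℝ) = 1 := by simp [fgraph, fgraphE, hx']
            have h0 : (0:ℝ) ≤ (d₁ x x' : ℝ) := (d₁ x x').2.1
            have hle1 : (d₂ (f x) y' : ℝ) ≤ 1 := (d₂ (f x) y').2.2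
            linarith
        have hcv : (fconv (fgraph f) (f x) x : ℝ) = 0 := by
          simp [fconv, fgraph, fgraphE]
        rw [hcv, zero_add]
        exact hinner
      · refine le_clamp ?_
        have h1 : (fconv (fgraph f) y x : ℝ) = 1 := by
          simp [fconv, fgraph, fgraphE, hx]
        have h0 : (0:ℝ) ≤ (fcomp d₁ (fgraph f) x y' : ℝ) := (fcomp d₁ (fgraph f) x y').2.1
        have hle1 : (d₂ y y' : ℝ) ≤ 1 := (d₂ y y').2.2
        linarith
    -- now chain
    have step1 : L.lift d₂ (T.map f t) (T.map f t') ≤ L.lift P (T.map f t) (T.map f t') :=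
      L.mono _ _ hle _ _
    have step2 : L.lift P (T.map f t) (T.map f t') ≤
        fcomp (L.lift (fconv (fgraph f))) (L.lift (fcomp d₁ (fgraph f)))
          (T.map f t) (T.map f t') := L.lax_comp _ _ _ _
    have step3 : fcomp (L.lift (fconv (fgraph f))) (L.lift (fcomp d₁ (fgraph f)))
          (T.map f t) (T.map f t') ≤
        clamp ((L.lift (fconv (fgraph f)) (T.map f t) t : ℝ)
          + (L.lift (fcomp d₁ (fgraph f)) t (T.map f t') : ℝ)) := iInf_le _ t
    have hz1 : L.lift (fconv (fgraph f)) (T.map f t) t = 0 := by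
      apply eq_zero_of_le_zero
      have := L.lax_graph_conv f (T.map f t) t
      simpa [fconv, fgraph, fgraphE] using this
    have hz2 : (L.lift (fcomp d₁ (fgraph f)) t (T.map f t') : ℝ) ≤ (L.lift d₁ t t' : ℝ) := by
      have s1 : L.lift (fcomp d₁ (fgraph f)) t (T.map f t') ≤
          fcomp (L.lift d₁) (L.lift (fgraph f)) t (T.map f t') := L.lax_comp _ _ _ _
      have s2 : fcomp (L.lift d₁) (L.lift (fgraph f)) t (T.map f t') ≤
          clamp ((L.lift d₁ t t' : ℝ) + (L.lift (fgraph f) t' (T.map f t') : ℝ)) :=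
        iInf_le _ t'
      have hz3 : L.lift (fgraph f) t' (T.map f t') = 0 := by
        apply eq_zero_of_le_zero
        have := L.lax_graph f t' (T.map f t')
        simpa [fgraph, fgraphE] using this
      rw [hz3] at s2
      have : clamp ((L.lift d₁ t t' : ℝ) + ((0:I) : ℝ)) = L.lift d₁ t t' := by
        rw [show ((0:I):ℝ) = 0 from rfl, add_zero, clamp_coe]
      rw [this] at s2
      exact le_trans s1 s2
    have final : (L.lift d₂ (T.map f t) (T.map f t') : ℝ) ≤
        (clamp ((L.lift (fconv (fgraph f)) (T.map f t) t : ℝ)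
          + (L.lift (fcomp d₁ (fgraph f)) t (T.map f t') : ℝ)) : ℝ) :=
      le_trans (le_trans step1 step2) step3
    rw [hz1] at final
    refine le_trans final ?_
    rw [show ((0:I):ℝ) = 0 from rfl, zero_add]
    refine le_trans (coe_clamp_le (L.lift (fcomp d₁ (fgraph f)) t (T.map f t')).2.1) hz2
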